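/- Let H̃ ≅ H ⊗ R be a minimal model with boundary d̄. For each i = 1,...,r define λ_i: H → H by assigning to x ∈ H the coefficient of t_i in d̄(x). Then the maps λ_1,...,λ_r pairwise anti-commute (λ_iλ_j + λ_jλ_i = 0 for all i,j), and hence define an action of the exterior algebra Λ_k(λ_1,...,λ_r) on H. -/

import Mathlib

/-!
Statement 8: let `H̃ ≅ H ⊗ R` be a minimal model (a free `R = k[t₁,…,t_r]`-cochain complex
`R ⊗ₖ H`, `H` a graded `k`-vector space, with `R`-linear boundary `d̄` of total degree 1,
`d̄ ∘ d̄ = 0`, whose constant part vanishes).  For `i = 1,…,r` let `λᵢ : H → H` assign to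
`x ∈ H` the coefficient of `tᵢ` in `d̄(x)`.  Then the `λᵢ` pairwise anti-commute
(`λᵢλⱼ + λⱼλᵢ = 0` for all `i, j`), and hence they define an action of the exterior algebra
`Λₖ(λ₁,…,λ_r)` on `H` (an algebra morphism from the exterior algebra on `k^r` to `End H`
sending the `i`-th generator to `λᵢ`).
-/


open MvPolynomial TensorProduct

/-- `R = k[t₁,…,t_r]`, graded with `deg tᵢ = 1`. -/
abbrev Rp (k : Type*) [Field k] (r : ℕ) := MvPolynomial (Fin r) k

variable (k : Type*) [Field k] (r : ℕ)
variable (H : Type*) [AddCommGroup H] [Module k H]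

/-- `x ↦ 1 ⊗ x : H → R ⊗ H`. -/
noncomputable def toT : H →ₗ[k] Rp k r ⊗[k] H := TensorProduct.mk k (Rp k r) H 1

/-- The augmentation `R → k`, `tᵢ ↦ 0`. -/
noncomputable def εR : Rp k r →ₗ[k] k := (aeval fun _ : Fin r => (0 : k)).toLinearMap

/-- The degree-`n` graded piece of `H̃ = R ⊗ₖ H` (`deg tᵢ = 1`), where `g` is the grading
of `H`: it is spanned by the tensors `q ⊗ x` with `q` homogeneous of degree `d`, `x ∈ H^j`
and `d + j = n`. -/
noncomputable def gradedPiece (g : ℤ → Submodule k H) (n : ℤ) :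
    Submodule k (Rp k r ⊗[k] H) :=
  Submodule.span k {z | ∃ (d : ℕ) (j : ℤ) (q : Rp k r) (x : H),
    q ∈ homogeneousSubmodule (Fin r) k d ∧ x ∈ g j ∧ (d : ℤ) + j = n ∧ z = q ⊗ₜ[k] x}

/-- The boundary `d̄` has total degree `1`. -/
def DegreeOne (g : ℤ → Submodule k H)
    (D : Rp k r ⊗[k] H →ₗ[Rp k r] Rp k r ⊗[k] H) : Prop :=
  ∀ (n : ℤ), ∀ z ∈ gradedPiece k r H g n, D z ∈ gradedPiece k r H g (n + 1)

/-- The constant part of the boundary vanishes (`d̄ ⊗_R k = 0`), i.e. the complex is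
minimal. -/
def MinimalB (D : Rp k r ⊗[k] H →ₗ[Rp k r] Rp k r ⊗[k] H) : Prop :=
  ∀ z : Rp k r ⊗[k] H, LinearMap.rTensor H (εR k r) (D z) = 0

/-- The `k`-linear extraction of the coefficient of `tᵢ`. -/
noncomputable def lcoeffR (i : Fin r) : Rp k r →ₗ[k] k where
  toFun q := coeff (Finsupp.single i 1) q
  map_add' p q := coeff_add _ p q
  map_smul' c p := coeff_smul _ c p

/-- `λᵢ : H → H`, the coefficient of `tᵢ` in `d̄(x)` (the linear part of the boundary). -/
noncomputable def lam (D : Rp k r ⊗[k] H →ₗ[Rp k r] Rp k r ⊗[k] H) (i : Fin r) :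
    H →ₗ[k] H :=
  (TensorProduct.lid k H).toLinearMap ∘ₗ LinearMap.rTensor H (lcoeffR k r i) ∘ₗ
    (D.restrictScalars k) ∘ₗ toT k r H

/-- The filtration `F_*` of Definition 3.1: `F₀(H) = 0` and
`F_{i+1}(H) = d̄⁻¹(F_i(H) ⊗ R) ∩ (H ⊗ k)`; `F_i(H̃) = F_i(H) ⊗ R` is its base change. -/
noncomputable def FH (D : Rp k r ⊗[k] H →ₗ[Rp k r] Rp k r ⊗[k] H) :
    ℕ → Submodule k H
  | 0 => ⊥
  | i + 1 =>
    Submodule.comap ((D.restrictScalars k) ∘ₗ toT k r H)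
      (Submodule.restrictScalars k ((FH D i).baseChange (Rp k r)))

/-- The length `ℓ(F_*(H̃))` of the filtration: the smallest `i` with `F_i = F_{i+1}`. -/
noncomputable def flen (D : Rp k r ⊗[k] H →ₗ[Rp k r] Rp k r ⊗[k] H) : ℕ :=
  sInf {i | FH k r H D i = FH k r H D (i + 1)}

/-- `(Λ⁺)^i H^q`: the iterates of the exterior-algebra action of `λ₁,…,λ_r` on `H^q`. -/
noncomputable def LPow (g : ℤ → Submodule k H)
    (D : Rp k r ⊗[k] H →ₗ[Rp k r] Rp k r ⊗[k] H) (q : ℤ) : ℕ → Submodule k H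
  | 0 => g q
  | i + 1 => ⨆ j : Fin r, (LPow g D q i).map (lam k r H D j)

/-- `ℓ_Λ(H^q)`: the least `i` with `(Λ⁺)^i H^q = 0`. -/
noncomputable def llen (g : ℤ → Submodule k H)
    (D : Rp k r ⊗[k] H →ₗ[Rp k r] Rp k r ⊗[k] H) (q : ℤ) : ℕ :=
  sInf {i | LPow k r H g D q i = ⊥}

/-!
Write `D (1 ⊗ x) = ∑ₘ tᵐ ⊗ δₘ x`. Since `D` is `R`-linear, the coefficient of `tⁿ` in
`D (D (1 ⊗ x))` is `∑_{a + b = n} δ_b (δ_a x)`, so `D ∘ D = 0` gives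
`∑_{a + b = n} δ_b ∘ δ_a = 0` for every `n`, and minimality is `δ₀ = 0`. For `n = tᵢtⱼ` the only
surviving splittings are `(tᵢ, tⱼ)` and `(tⱼ, tᵢ)`: this gives `λⱼλᵢ + λᵢλⱼ = 0` for `i ≠ j`
and `λᵢ² = 0` for `i = j` (which matters in characteristic 2). These are exactly the relations
needed to lift `v ↦ ∑ vᵢ λᵢ` to the exterior algebra.
-/

namespace MvPolynomial

open Finset

variable {R M σ : Type*} [CommSemiring R] [AddCommMonoid M] [Module R M]

noncomputable def coeffTensor (m : σ →₀ ℕ) : MvPolynomial σ R ⊗[R] M →ₗ[R] M :=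
  (TensorProduct.lid R M).toLinearMap ∘ₗ LinearMap.rTensor M (lcoeff R m)

@[simp]
lemma coeffTensor_tmul (m : σ →₀ ℕ) (p : MvPolynomial σ R) (x : M) :
    coeffTensor m (p ⊗ₜ[R] x) = coeff m p • x := rfl

lemma coeffTensor_smul [DecidableEq σ] (n : σ →₀ ℕ) (p : MvPolynomial σ R)
    (w : MvPolynomial σ R ⊗[R] M) :
    coeffTensor n (p • w) = ∑ x ∈ antidiagonal n, coeff x.1 p • coeffTensor x.2 w := by
  induction w using TensorProduct.induction_on with
  | zero => simp
  | tmul q y => simp [smul_tmul', coeff_mul, sum_smul, mul_smul]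
  | add w w' hw hw' => simp only [smul_add, map_add, hw, hw', sum_add_distrib]

end MvPolynomial

namespace Finsupp

lemma eq_single_one_of_add_eq_single_add_single {σ : Type*} {i j : σ} {a b : σ →₀ ℕ}
    (h : a + b = single i 1 + single j 1) (ha : a ≠ 0) (hb : b ≠ 0) :
    (a, b) = (single i 1, single j 1) ∨ (a, b) = (single j 1, single i 1) := by
  have hdeg : degree a + degree b = 2 := by
    rw [← map_add, h, map_add, degree_single, degree_single]
  have hpos : ∀ c : σ →₀ ℕ, c ≠ 0 → 0 < degree c := fun c hc =>
    Nat.pos_of_ne_zero ((degree_eq_zero_iff c).not.mpr hc)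
  have hsingle : ∀ c : σ →₀ ℕ, degree c = 1 → ∃ l, single l 1 = c := fun c hc =>
    (range_single_one (σ := σ)).symm.subset hc
  have ha1 := hpos a ha
  have hb1 := hpos b hb
  obtain ⟨l, rfl⟩ := hsingle a (by lia)
  obtain ⟨l', rfl⟩ := hsingle b (by lia)
  rcases (single_add_single_eq_single_add_single one_ne_zero one_ne_zero).mp h with
    ⟨rfl, rfl⟩ | ⟨-, rfl, rfl⟩ | ⟨h2, -⟩
  · exact .inl rfl
  · exact .inr rfl
  · exact absurd h2 (by norm_num)

end Finsupp

namespace ExteriorAlgebra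

variable {R κ A : Type*} [CommRing R] [Fintype κ] [Ring A] [Algebra R A]

lemma sum_smul_mul_self_eq_zero {f : κ → A} (hsq : ∀ i, f i * f i = 0)
    (hanti : ∀ i j, f i * f j + f j * f i = 0) (v : κ → R) :
    (∑ i, v i • f i) * (∑ i, v i • f i) = 0 := by
  rw [Finset.sum_mul_sum, ← Finset.sum_product']
  refine Finset.sum_ninvolution Prod.swap (fun p => ?_) (fun p hp hswap => hp ?_)
    (fun p => Finset.mem_univ _) Prod.swap_swap
  · rw [Prod.fst_swap, Prod.snd_swap, smul_mul_smul_comm, smul_mul_smul_comm, mul_comm (v p.2),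
      ← smul_add, hanti, smul_zero]
  · rw [show p.2 = p.1 from congrArg Prod.fst hswap, smul_mul_smul_comm, hsq, smul_zero]

variable (R) in
lemma exists_algHom_ι_single [DecidableEq κ] {f : κ → A} (hsq : ∀ i, f i * f i = 0)
    (hanti : ∀ i j, f i * f j + f j * f i = 0) :
    ∃ Φ : ExteriorAlgebra R (κ → R) →ₐ[R] A, ∀ i, Φ (ι R (Pi.single i 1)) = f i := by
  refine ⟨lift R ⟨Fintype.linearCombination R f, fun v => ?_⟩, fun i => ?_⟩
  · simpa only [Fintype.linearCombination_apply] using sum_smul_mul_self_eq_zero hsq hanti v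
  · exact (lift_ι_apply R _ _ _).trans
      ((Fintype.linearCombination_apply_single R f i 1).trans (one_smul R (f i)))

end ExteriorAlgebra

section Boundary

open Finset Finsupp

variable {R M σ : Type*} [CommSemiring R] [AddCommMonoid M] [Module R M]
variable (D : MvPolynomial σ R ⊗[R] M →ₗ[MvPolynomial σ R] MvPolynomial σ R ⊗[R] M)

/-- The coefficient of `t^m` in `D (1 ⊗ x)`; for `m = tᵢ` this is `λᵢ`. -/
noncomputable def boundaryCoeff (m : σ →₀ ℕ) : M →ₗ[R] M :=
  coeffTensor m ∘ₗ D.restrictScalars R ∘ₗ TensorProduct.mk R (MvPolynomial σ R) M 1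

lemma boundaryCoeff_apply (m : σ →₀ ℕ) (x : M) :
    boundaryCoeff D m x = coeffTensor m (D (1 ⊗ₜ x)) := rfl

lemma coeffTensor_map [DecidableEq σ] (n : σ →₀ ℕ) (z : MvPolynomial σ R ⊗[R] M) :
    coeffTensor n (D z) = ∑ x ∈ antidiagonal n, boundaryCoeff D x.2 (coeffTensor x.1 z) := by
  induction z using TensorProduct.induction_on with
  | zero => simp
  | tmul p y =>
    have hD : D (p ⊗ₜ y) = p • D (1 ⊗ₜ y) := by rw [← map_smul, smul_tmul', smul_eq_mul, mul_one]
    simp only [hD, coeffTensor_smul, coeffTensor_tmul, map_smul, boundaryCoeff_apply]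
  | add z z' hz hz' => simp only [map_add, hz, hz', sum_add_distrib]

lemma sum_antidiagonal_boundaryCoeff_comp [DecidableEq σ] (hDD : D ∘ₗ D = 0) (n : σ →₀ ℕ) :
    ∑ x ∈ antidiagonal n, boundaryCoeff D x.2 ∘ₗ boundaryCoeff D x.1 = 0 := by
  ext x
  have h := congrArg (coeffTensor n) (LinearMap.congr_fun hDD (1 ⊗ₜ x))
  rw [LinearMap.comp_apply, coeffTensor_map, LinearMap.zero_apply, map_zero] at h
  simpa only [LinearMap.sum_apply, LinearMap.comp_apply, LinearMap.zero_apply,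
    ← boundaryCoeff_apply] using h

lemma sum_boundaryCoeff_single_comp [DecidableEq σ] (hDD : D ∘ₗ D = 0)
    (h0 : boundaryCoeff D 0 = 0) (i j : σ) :
    ∑ x ∈ {(single i 1, single j 1), (single j 1, single i 1)},
      boundaryCoeff D x.2 ∘ₗ boundaryCoeff D x.1 = 0 := by
  rw [← sum_antidiagonal_boundaryCoeff_comp D hDD (single i 1 + single j 1)]
  refine sum_subset (by simp [insert_subset_iff, add_comm]) fun x hx hxs => ?_
  by_contra hne
  refine hxs ?_
  have hx1 : x.1 ≠ 0 := by rintro h; simp [h, h0] at hne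
  have hx2 : x.2 ≠ 0 := by rintro h; simp [h, h0] at hne
  simpa using eq_single_one_of_add_eq_single_add_single (mem_antidiagonal.mp hx) hx1 hx2

lemma boundaryCoeff_single_comp_self [DecidableEq σ] (hDD : D ∘ₗ D = 0)
    (h0 : boundaryCoeff D 0 = 0) (i : σ) :
    boundaryCoeff D (single i 1) ∘ₗ boundaryCoeff D (single i 1) = 0 := by
  simpa using sum_boundaryCoeff_single_comp D hDD h0 i i

lemma boundaryCoeff_single_anticomm [DecidableEq σ] (hDD : D ∘ₗ D = 0)
    (h0 : boundaryCoeff D 0 = 0) (i j : σ) :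
    boundaryCoeff D (single i 1) ∘ₗ boundaryCoeff D (single j 1) +
      boundaryCoeff D (single j 1) ∘ₗ boundaryCoeff D (single i 1) = 0 := by
  obtain rfl | hij := eq_or_ne i j
  · rw [boundaryCoeff_single_comp_self D hDD h0, add_zero]
  · have hne : (single i 1, single j 1) ≠ (single j 1, single i 1) := by
      simp [(single_left_injective (one_ne_zero (α := ℕ))).ne hij]
    rw [add_comm, ← sum_boundaryCoeff_single_comp D hDD h0 i j, sum_pair hne]

end Boundary

variable {k r H} in
lemma boundaryCoeff_zero_of_minimalB {D : Rp k r ⊗[k] H →ₗ[Rp k r] Rp k r ⊗[k] H}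
    (hmin : MinimalB k r H D) : boundaryCoeff D 0 = 0 := by
  have hε : lcoeff k 0 = εR k r := by
    ext p
    simp [εR, constantCoeff_eq]
  ext x
  simpa [boundaryCoeff_apply, coeffTensor, hε] using hmin (1 ⊗ₜ x)

theorem statement8 (k : Type*) [Field k] (r : ℕ)
    (H : Type*) [AddCommGroup H] [Module k H]
    (D : Rp k r ⊗[k] H →ₗ[Rp k r] Rp k r ⊗[k] H)
    (hDD : D ∘ₗ D = 0) (hmin : MinimalB k r H D) :
    (∀ i j : Fin r,
      lam k r H D i ∘ₗ lam k r H D j + lam k r H D j ∘ₗ lam k r H D i = 0) ∧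
    ∃ Φ : ExteriorAlgebra k (Fin r → k) →ₐ[k] Module.End k H,
      ∀ i : Fin r, Φ (ExteriorAlgebra.ι k (Pi.single i 1)) = lam k r H D i := by
  have h0 := boundaryCoeff_zero_of_minimalB hmin
  have hsq (i : Fin r) : lam k r H D i * lam k r H D i = 0 :=
    boundaryCoeff_single_comp_self D hDD h0 i
  have hanti (i j : Fin r) :
      lam k r H D i ∘ₗ lam k r H D j + lam k r H D j ∘ₗ lam k r H D i = 0 :=
    boundaryCoeff_single_anticomm D hDD h0 i j
  exact ⟨hanti, ExteriorAlgebra.exists_algHom_ι_single k hsq hanti⟩
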